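/- Let K be a number field and U a torsion-free subgroup of the unit group (𝓞 K)ˣ. Form the semidirect product G = 𝓞 K ⋊ U, where the normal factor is the additive group of 𝓞 K and u ∈ U acts by multiplication by u. Then every group homomorphism f : G → U is trivial on the normal factor, i.e. f(ι(a)) = 1 for every a ∈ 𝓞 K, where ι : 𝓞 K → G is the canonical inclusion of the normal factor. -/

import Mathlib

open NumberField SemidirectProduct

/-- The action of a subgroup `U ≤ (𝓞 K)ˣ` on the additive group of `𝓞 K`
(written multiplicatively), where `u ∈ U` acts by multiplication by `u`. -/
noncomputable def otAction (K : Type*) [Field K] [NumberField K] (U : Subgroup (𝓞 K)ˣ) :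
    U →* MulAut (Multiplicative (𝓞 K)) where
  toFun u := AddEquiv.toMultiplicative (AddAut.mulLeft (u : (𝓞 K)ˣ))
  map_one' := by ext x; simp; rfl
  map_mul' u v := by ext x; simp [mul_assoc]; rfl

/-- A monoid is torsion-free if no nontrivial element has finite order
(the Mathlib definition of December 2024, since removed). -/
def Monoid.IsTorsionFree (G : Type*) [Monoid G] : Prop :=
  ∀ g : G, g ≠ 1 → ¬IsOfFinOrder g

/-!
Let `φ` be the restriction of `f` to the normal factor. Since `U` is abelian, `φ` is invariant
under conjugation by `inr u`, i.e. `φ (u x) = φ x`, so `φ` kills `(u - 1) 𝓞 K`. If `u ≠ 1`, the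
nonzero ideal `(u - 1)` contains its absolute norm `n > 0`, so `φ (a) ^ n = φ (n a) = 1` and
torsion-freeness gives `φ (a) = 1`. If `U` is trivial there is nothing to prove.
-/

theorem SemidirectProduct.map_inl_aut_of_commGroup {N G H : Type*} [Group N] [Group G]
    [CommGroup H] {φ : G →* MulAut N} (f : N ⋊[φ] G →* H) (g : G) (n : N) :
    f (inl (φ g n)) = f (inl n) := by
  rw [inl_aut, map_mul, map_mul, mul_right_comm, ← map_mul f, ← map_mul inr, mul_inv_cancel,
    map_one, map_one, one_mul]

theorem Ideal.exists_pos_natCast_dvd {S : Type*} [CommRing S] [IsDedekindDomain S]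
    [Module.Free ℤ S] [Module.Finite ℤ S] {x : S} (hx : x ≠ 0) :
    ∃ n : ℕ, 0 < n ∧ x ∣ (n : S) := by
  refine ⟨absNorm (span {x}), Nat.pos_of_ne_zero ?_, mem_span_singleton.mp (absNorm_mem _)⟩
  rwa [Ne, absNorm_eq_zero_iff, span_singleton_eq_bot]

theorem pow_map_ofAdd_eq_one_of_sub_one_dvd {R H : Type*} [CommRing R] [Group H]
    (φ : Multiplicative R →* H) {c : R} (hφ : ∀ x, φ (.ofAdd (c * x)) = φ (.ofAdd x))
    {n : ℕ} (hn : c - 1 ∣ (n : R)) (a : R) : φ (.ofAdd a) ^ n = 1 := by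
  obtain ⟨b, hb⟩ := hn
  have hkill : φ (.ofAdd ((c - 1) * (b * a))) = 1 := by
    rw [sub_mul, one_mul, ofAdd_sub, map_div, hφ, div_self']
  rwa [← mul_assoc, ← hb, ← nsmul_eq_mul, ofAdd_nsmul, map_pow] at hkill

/-- For a number field `K` and a torsion-free subgroup
`U ≤ (𝓞 K)ˣ`, every group homomorphism `𝓞 K ⋊ U → U` is trivial on the normal
factor `𝓞 K`. -/
theorem stmt1 (K : Type*) [Field K] [NumberField K] (U : Subgroup (𝓞 K)ˣ)
    (hU : Monoid.IsTorsionFree U)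
    (f : (Multiplicative (𝓞 K) ⋊[otAction K U] U) →* U) (a : 𝓞 K) :
    f (SemidirectProduct.inl (Multiplicative.ofAdd a)) = 1 := by
  by_cases hnontriv : ∃ u : U, u ≠ 1
  · obtain ⟨u, hu⟩ := hnontriv
    have hu₁ : ((u : (𝓞 K)ˣ) : 𝓞 K) - 1 ≠ 0 := by
      rwa [sub_ne_zero, ne_eq, ← Units.val_one, Units.val_inj, ← OneMemClass.coe_one U,
        Subtype.coe_inj]
    obtain ⟨n, hn, hdvd⟩ := Ideal.exists_pos_natCast_dvd hu₁
    have hpow := pow_map_ofAdd_eq_one_of_sub_one_dvd (f.comp inl)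
      (fun x ↦ map_inl_aut_of_commGroup f u (.ofAdd x)) hdvd a
    by_contra hne
    exact hU _ hne (isOfFinOrder_iff_pow_eq_one.mpr ⟨n, hn, hpow⟩)
  · exact not_exists_not.mp hnontriv _
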